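/- For a compact interval I contained in the open interval (-beta/2, beta/2), a band-limited integrable function f with supp(f-hat) subset of I, and a function g in the Feichtinger algebra S_0(R) with g-hat = 1 on I and supp(g-hat) contained in [-beta/2, beta/2], setting alpha = 1/beta one has the reconstruction formula f(t) = alpha · sum_{k in Z} f(alpha k) g(t - alpha k) for all t in R. -/

import Mathlib

open MeasureTheory Filter

/-- The Fourier transform on the real line, `F f (s) = ∫ f(t) e^{-2πi s t} dt`. -/
noncomputable def fourier1 (f : ℝ → ℂ) (s : ℝ) : ℂ :=
  ∫ t, f t * Complex.exp (-(2 * Real.pi * Complex.I * (s * t)))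

/-!
Since `f̂` vanishes outside `[-β/2, β/2]`, Fourier inversion identifies the Fourier coefficients
of `f̂`, viewed on the circle `ℝ/βℤ`, with the samples `β⁻¹ f(k/β)`, and those of
`ξ ↦ e^{2πiξt} ĝ(ξ)` with `β⁻¹ g(t - k/β)`. Parseval's identity on the circle then gives
`∑ₖ f(k/β) g(t - k/β) = β ∫ f̂(ξ) ĝ(ξ) e^{2πiξt} dξ`, and as `ĝ = 1` on the support of `f̂`
the integral is `f(t)`.
-/

open Real Complex FourierTransform Set AddCircle ComplexConjugate

theorem fourier1_eq_fourier (f : ℝ → ℂ) : fourier1 f = 𝓕 f := by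
  ext s
  rw [fourier1, fourier_real_eq_integral_exp_smul]
  congr 1 with t
  rw [smul_eq_mul, mul_comm]
  congr 2
  push_cast
  ring

theorem MeasureTheory.Integrable.continuous_fourier {f : ℝ → ℂ} (hf : Integrable f) :
    Continuous (𝓕 f) :=
  VectorFourier.fourierIntegral_continuous continuous_fourierChar continuous_inner hf

theorem fourierInv_real_eq (h : ℝ → ℂ) (x : ℝ) : 𝓕⁻ h x = ∫ ξ, 𝐞 (ξ * x) • h ξ := by
  simp [fourierInv_eq_fourier_neg, fourier_real_eq]

theorem fourierInv_fourierChar_smul (h : ℝ → ℂ) (t x : ℝ) :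
    𝓕⁻ (fun ξ ↦ 𝐞 (ξ * t) • h ξ) x = 𝓕⁻ h (x + t) := by
  simp only [fourierInv_real_eq, smul_smul, ← AddChar.map_add_eq_mul, mul_add]

theorem intervalIntegral_eq_integral_of_support_subset_Icc {E : Type*} [NormedAddCommGroup E]
    [NormedSpace ℝ E] {μ : Measure ℝ} [NullSingletonClass μ] {a b : ℝ} (hab : a ≤ b) {f : ℝ → E}
    (h : Function.support f ⊆ Icc a b) : ∫ x in a..b, f x ∂μ = ∫ x, f x ∂μ := by
  rw [intervalIntegral.integral_of_le hab, ← integral_Icc_eq_integral_Ioc,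
    ← integral_indicator measurableSet_Icc, indicator_eq_self.2 h]

theorem fourierCoeffOn_eq_fourierInv {a b : ℝ} (hab : a < b) {Φ : ℝ → ℂ}
    (hΦ : Function.support Φ ⊆ Icc a b) (n : ℤ) :
    fourierCoeffOn hab Φ n = (b - a)⁻¹ * 𝓕⁻ Φ (-n / (b - a)) := by
  rw [fourierCoeffOn_eq_integral, fourierInv_real_eq, one_div, ← Complex.real_smul,
    intervalIntegral_eq_integral_of_support_subset_Icc hab.le]
  · congr 2 with x
    rw [fourier_coe_apply, Circle.smul_def, fourierChar_apply]
    congr 2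
    push_cast
    ring
  · exact (Function.support_smul_subset_right (fun x : ℝ ↦ fourier (-n) (x : AddCircle (b - a)))
      Φ).trans hΦ

theorem fourierCoeff_conj {T : ℝ} [Fact (0 < T)] (f : AddCircle T → ℂ) (n : ℤ) :
    fourierCoeff (fun x ↦ conj (f x)) n = conj (fourierCoeff f (-n)) := by
  simp only [fourierCoeff, ← integral_conj, smul_eq_mul, map_mul, neg_neg, fourier_neg]

theorem hasSum_prod_fourierCoeff {T : ℝ} [Fact (0 < T)] (f g : Lp ℂ 2 (@haarAddCircle T _)) :
    HasSum (fun n ↦ conj (fourierCoeff f n) * fourierCoeff g n)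
      (∫ t, conj (f t) * g t ∂haarAddCircle) := by
  simp_rw [mul_comm (conj _)]
  refine HasSum.congr_fun (fourierBasis.hasSum_inner_mul_inner f g) (fun n ↦ ?_)
  simp only [← fourierBasis_repr, HilbertBasis.repr_apply_apply, inner_conj_symm,
    mul_comm (inner ℂ f _)]

theorem hasSum_fourierCoeffOn_neg_mul {a b : ℝ} (hab : a < b) {f g : ℝ → ℂ}
    (hf : MemLp f 2 (volume.restrict (Ioc a b))) (hg : MemLp g 2 (volume.restrict (Ioc a b))) :
    HasSum (fun n : ℤ ↦ fourierCoeffOn hab f (-n) * fourierCoeffOn hab g n)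
      ((b - a)⁻¹ • ∫ x in a..b, f x * g x) := by
  have := Fact.mk (sub_pos.2 hab)
  rw [← add_sub_cancel a b] at hf hg
  have hf' := hf.star.memLp_liftIoc.haarAddCircle
  have hg' := hg.memLp_liftIoc.haarAddCircle
  convert hasSum_prod_fourierCoeff hf'.toLp hg'.toLp using 1
  · ext n
    rw [fourierCoeff_congr_ae hf'.coeFn_toLp, fourierCoeff_congr_ae hg'.coeFn_toLp]
    change fourierCoeff (liftIoc (b - a) a f) (-n) * fourierCoeff (liftIoc (b - a) a g) n =
      conj (fourierCoeff (fun x ↦ conj (liftIoc (b - a) a f x)) n) * _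
    rw [fourierCoeff_conj, conj_conj]
  · calc (b - a)⁻¹ • ∫ x in a..b, f x * g x
        = (b - a)⁻¹ • ∫ t, liftIoc (b - a) a (fun x ↦ f x * g x) t := by
          rw [integral_liftIoc_eq_intervalIntegral, add_sub_cancel]
      _ = ∫ t, liftIoc (b - a) a (fun x ↦ f x * g x) t ∂haarAddCircle :=
          integral_haarAddCircle.symm
      _ = _ := by
          refine integral_congr_ae ?_
          filter_upwards [hf'.coeFn_toLp, hg'.coeFn_toLp] with t hft hgt
          rw [hft, hgt]
          exact congrArg (· * _) (conj_conj _).symm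

theorem hasSum_fourierInv_mul_fourierInv {a b : ℝ} (hab : a < b) {Φ Ψ : ℝ → ℂ}
    (hΦ : MemLp Φ 2 (volume.restrict (Ioc a b))) (hΨ : MemLp Ψ 2 (volume.restrict (Ioc a b)))
    (hΦs : Function.support Φ ⊆ Icc a b) (hΨs : Function.support Ψ ⊆ Icc a b) :
    HasSum (fun k : ℤ ↦ 𝓕⁻ Φ ((b - a)⁻¹ * k) * 𝓕⁻ Ψ (-((b - a)⁻¹ * k)))
      ((b - a) • ∫ x, Φ x * Ψ x) := by
  have h := hasSum_fourierCoeffOn_neg_mul hab hΦ hΨ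
  rw [intervalIntegral_eq_integral_of_support_subset_Icc hab.le
    ((Function.support_mul_subset_left _ _).trans hΦs)] at h
  simp only [fourierCoeffOn_eq_fourierInv hab hΦs, fourierCoeffOn_eq_fourierInv hab hΨs] at h
  have hba : (b - a : ℂ) ≠ 0 := by exact_mod_cast (sub_pos.2 hab).ne'
  have hval : ((b - a) ^ 2 : ℂ) * ((b - a)⁻¹ • ∫ x, Φ x * Ψ x) = (b - a) • ∫ x, Φ x * Ψ x := by
    rw [Complex.real_smul, Complex.real_smul]
    push_cast
    field_simp
  rw [← hval]
  refine (h.mul_left _).congr_fun fun k ↦ ?_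
  push_cast
  field_simp

theorem shannon_sampling_oversampled_general
    (β : ℝ) (hβ : 0 < β) (I : Set ℝ)
    (hII : I ⊆ Set.Ioo (-(β / 2)) (β / 2))
    (f : ℝ → ℂ) (hfc : Continuous f) (hfi : Integrable f)
    (hfband : ∀ s, s ∉ I → fourier1 f s = 0)
    (g : ℝ → ℂ) (hgc : Continuous g) (hgi : Integrable g)
    (hgfi : Integrable (fourier1 g))
    (hg1 : ∀ s ∈ I, fourier1 g s = 1)
    (hg0 : ∀ s : ℝ, β / 2 < |s| → fourier1 g s = 0) :
    ∀ t : ℝ, f t = β⁻¹ * ∑' k : ℤ, f (β⁻¹ * k) * g (t - β⁻¹ * k) := by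
  intro t
  simp only [fourier1_eq_fourier] at hfband hgfi hg1 hg0
  have hsuppf : Function.support (𝓕 f) ⊆ Icc (-(β / 2)) (β / 2) := fun s hs ↦
    Ioo_subset_Icc_self (hII (by_contra fun h ↦ hs (hfband s h)))
  have hfg (x : ℝ) : 𝓕 f x * 𝓕 g x = 𝓕 f x := by
    by_cases hx : x ∈ I
    · rw [hg1 x hx, mul_one]
    · rw [hfband x hx, zero_mul]
  have hFf : HasCompactSupport (𝓕 f) := .of_support_subset_isCompact isCompact_Icc hsuppf
  have hfinv : 𝓕⁻ (𝓕 f) = f :=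
    hfc.fourierInv_fourier_eq hfi (hfi.continuous_fourier.integrable_of_hasCompactSupport hFf)
  set Ψ : ℝ → ℂ := fun ξ ↦ 𝐞 (ξ * t) • 𝓕 g ξ
  have hsuppΨ : Function.support Ψ ⊆ Icc (-(β / 2)) (β / 2) := fun s hs ↦
    abs_le.1 (not_lt.1 fun h ↦ hs (by simp [Ψ, hg0 s h]))
  have hΨ : Continuous Ψ :=
    (continuous_fourierChar.comp (continuous_mul_const t)).smul hgi.continuous_fourier
  have hint : ∫ x, 𝓕 f x * Ψ x = f t := by
    simp only [Ψ, mul_smul_comm, hfg, ← fourierInv_real_eq, hfinv]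
  have key := hasSum_fourierInv_mul_fourierInv (by linarith)
    ((hfi.continuous_fourier.memLp_of_hasCompactSupport hFf).restrict _)
    ((hΨ.memLp_of_hasCompactSupport (.of_support_subset_isCompact isCompact_Icc hsuppΨ)).restrict _)
    hsuppf hsuppΨ
  rw [show β / 2 - -(β / 2) = β by ring, hint] at key
  simp only [Ψ, fourierInv_fourierChar_smul, hfinv, hgc.fourierInv_fourier_eq hgi hgfi,
    neg_add_eq_sub] at key
  rw [key.tsum_eq, Complex.real_smul, ← mul_assoc, ← Complex.ofReal_mul, inv_mul_cancel₀ hβ.ne',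
    Complex.ofReal_one, one_mul]

/-- Shannon's sampling theorem with oversampling: if `f ∈ B¹_I` is band-limited to a compact
set `I ⊆ (-β/2, β/2)` and `g` is integrable with integrable Fourier transform satisfying
`ĝ = 1` on `I` and `ĝ = 0` outside `[-β/2, β/2]`, then with `α = β⁻¹` one has
`f(t) = α ∑_{k ∈ ℤ} f(αk) g(t - αk)` for all `t`. -/
theorem shannon_sampling_oversampled
    (β : ℝ) (hβ : 0 < β) (I : Set ℝ) (hI : IsCompact I)
    (hII : I ⊆ Set.Ioo (-(β / 2)) (β / 2))
    (f : ℝ → ℂ) (hfc : Continuous f) (hfi : Integrable f)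
    (hf0 : Tendsto f (cocompact ℝ) (nhds 0))
    (hfband : ∀ s, s ∉ I → fourier1 f s = 0)
    (g : ℝ → ℂ) (hgc : Continuous g) (hgi : Integrable g)
    (hgfi : Integrable (fourier1 g))
    (hg1 : ∀ s ∈ I, fourier1 g s = 1)
    (hg0 : ∀ s : ℝ, β / 2 < |s| → fourier1 g s = 0) :
    ∀ t : ℝ, f t = β⁻¹ * ∑' k : ℤ, f (β⁻¹ * k) * g (t - β⁻¹ * k) :=
  shannon_sampling_oversampled_general β hβ I hII f hfc hfi hfband g hgc hgi hgfi hg1 hg0
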